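/- arXiv:2309.15401 — 2 statements merged into one kernel-verified Lean document; each statement's English description precedes it below -/
import Mathlib

section
/- (Lemma 1, flow form.) Suppose (A1), (A2) and (A3) hold. Let θ : [t₀, ∞) → ℝⁿ be differentiable with θ′(t) = F(θ(t)) for all t ≥ t₀ and θ(t₀) ∈ C. Then θ(t) ∈ C for all t ≥ t₀, the function t ↦ J(θ(t)) is nonincreasing and is strictly decreasing on every interval on which θ(t) ≠ θ*_c, and if the trajectory {θ(t) : t ≥ t₀} is bounded then θ(t) → θ*_c as t → ∞. -/
open scoped RealInnerProductSpace
open Set Filter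

open Classical in
/-- The safe-gradient-flow vector field `F`. -/
noncomputable def Fvec {n : ℕ} (J h : EuclideanSpace ℝ (Fin n) → ℝ) (c : ℝ)
    (θ : EuclideanSpace ℝ (Fin n)) : EuclideanSpace ℝ (Fin n) :=
  if gradient h θ = 0 then -gradient J θ
  else -gradient J θ +
    (max (⟪gradient J θ, gradient h θ⟫ - c * h θ) 0 / ‖gradient h θ‖ ^ 2) • gradient h θ

/-!
Write `F = -∇J + λ ∇h` with the multiplier `λ ≥ 0`. Complementary slackness gives
`⟪∇h, F⟫ ≥ -c h` and `⟪∇J, F⟫ = -‖F‖² - λ c h`. The first makes `h ∘ θ` increase wherever it is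
negative (there `∇h ≠ 0` by (A2)), so the trajectory cannot leave `C`. The second makes `J` a
Lyapunov function on `C` whose rate vanishes only at KKT points, i.e. only at `θ*_c` by (A1) and
(A3). A bounded trajectory lies in a compact subset of `C` on which `F` is continuous, hence
bounded; off any ball around `θ*_c` the rate is then bounded away from `0`, so each far visit
costs `J` a fixed amount, which `J ∘ θ`, being bounded below, can afford only until it is close
to its infimum.
-/

open Topology

section Gradient

variable {E : Type*} [NormedAddCommGroup E] [InnerProductSpace ℝ E] [CompleteSpace E]

theorem ContDiff.continuous_gradient {f : E → ℝ} (hf : ContDiff ℝ 1 f) :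
    Continuous (gradient f) :=
  (InnerProductSpace.toDual ℝ E).symm.continuous.comp (hf.continuous_fderiv one_ne_zero)

theorem hasDerivAt_comp_of_gradient {f : E → ℝ} {γ : ℝ → E} {v : E} {t : ℝ}
    (hf : DifferentiableAt ℝ f (γ t)) (hγ : HasDerivAt γ v t) :
    HasDerivAt (fun s => f (γ s)) ⟪gradient f (γ t), v⟫ t := by
  have := hf.hasGradientAt.hasFDerivAt.comp_hasDerivAt t hγ
  rwa [InnerProductSpace.toDual_apply_apply] at this

end Gradient

section RealFunctions

variable {φ φ' : ℝ → ℝ}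

/-- Comparison with the constant barrier `φ t / 2 < 0`, which `φ` cannot cross downwards since
it increases wherever it is negative. -/
theorem nonneg_of_hasDerivAt_pos_of_neg {t₀ : ℝ} (hφ : ∀ t ≥ t₀, HasDerivAt φ (φ' t) t)
    (h₀ : 0 ≤ φ t₀) (hpos : ∀ t ≥ t₀, φ t < 0 → 0 < φ' t) : ∀ t ≥ t₀, 0 ≤ φ t := by
  intro t ht
  by_contra! hneg
  have hcont : ContinuousOn (fun s => -φ s) (Icc t₀ t) := fun s hs =>
    (hφ s hs.1).continuousAt.neg.continuousWithinAt
  have hbarrier := image_le_of_deriv_right_lt_deriv_boundary' hcont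
    (fun s hs => (hφ s hs.1).neg.hasDerivWithinAt) (B := fun _ => -φ t / 2) (B' := fun _ => 0)
    (by linarith) continuousOn_const (fun _ _ => hasDerivWithinAt_const _ _ _)
    (fun s hs hs' => by linarith [hpos s hs.1 (by linarith)]) ⟨ht, le_rfl⟩
  linarith

theorem sub_le_mul_sub_of_hasDerivAt_le {a b C : ℝ} (hab : a ≤ b)
    (hφ : ∀ t ∈ Icc a b, HasDerivAt φ (φ' t) t) (hC : ∀ t ∈ Ioo a b, φ' t ≤ C) :
    φ b - φ a ≤ C * (b - a) :=
  (convex_Icc a b).image_sub_le_mul_sub_of_deriv_le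
    (fun t ht => (hφ t ht).continuousAt.continuousWithinAt)
    (fun t ht => (hφ t (interior_subset ht)).differentiableAt.differentiableWithinAt)
    (fun t ht => by
      rw [interior_Icc] at ht
      rw [(hφ t (Ioo_subset_Icc_self ht)).deriv]
      exact hC t ht)
    a ⟨le_rfl, hab⟩ b ⟨hab, le_rfl⟩ hab

theorem antitoneOn_of_hasDerivAt_nonpos {D : Set ℝ} (hD : Convex ℝ D)
    (hφ : ∀ t ∈ D, HasDerivAt φ (φ' t) t) (hφ' : ∀ t ∈ interior D, φ' t ≤ 0) :
    AntitoneOn φ D :=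
  antitoneOn_of_hasDerivWithinAt_nonpos hD
    (fun t ht => (hφ t ht).continuousAt.continuousWithinAt)
    (fun t ht => (hφ t (interior_subset ht)).hasDerivWithinAt) hφ'

theorem strictAntiOn_of_hasDerivAt_neg {D : Set ℝ} (hD : Convex ℝ D)
    (hφ : ∀ t ∈ D, HasDerivAt φ (φ' t) t) (hφ' : ∀ t ∈ interior D, φ' t < 0) :
    StrictAntiOn φ D :=
  strictAntiOn_of_hasDerivWithinAt_neg hD
    (fun t ht => (hφ t ht).continuousAt.continuousWithinAt)
    (fun t ht => (hφ t (interior_subset ht)).hasDerivWithinAt) hφ'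

end RealFunctions

section Lyapunov

variable {E : Type*} [NormedAddCommGroup E] [NormedSpace ℝ E]
  {γ γ' : ℝ → E} {V W : E → ℝ} {K : Set E} {p : E} {t₀ M : ℝ}

/-- Over a time step `Δ` short enough for the curve to stay `ε / 2`-far from `p`, `W` is bounded
away from `0` by compactness, so `V` drops by a fixed amount. -/
theorem exists_uniform_drop_of_le_dist (hK : IsCompact K) (hγK : ∀ t ≥ t₀, γ t ∈ K)
    (hγ : ∀ t ≥ t₀, HasDerivAt γ (γ' t) t) (hγ' : ∀ t ≥ t₀, ‖γ' t‖ ≤ M)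
    (hV : ∀ t ≥ t₀, HasDerivAt (fun t => V (γ t)) (W (γ t)) t)
    (hWK : ContinuousOn W K) (hWneg : ∀ x ∈ K, x ≠ p → W x < 0) {ε : ℝ} (hε : 0 < ε) :
    ∃ η > 0, ∃ Δ > 0, ∀ t ≥ t₀, ε ≤ dist (γ t) p → V (γ (t + Δ)) + η ≤ V (γ t) := by
  set K' := K ∩ {x | ε / 2 ≤ dist x p}
  have hK' : IsCompact K' :=
    hK.inter_right (isClosed_le continuous_const (continuous_id.dist continuous_const))
  obtain ⟨δ, hδ, hδW⟩ := hK'.exists_forall_le' (f := fun x => -W x)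
    (hWK.neg.mono inter_subset_left) (a := 0) fun x hx => neg_pos.2 (hWneg x hx.1 fun hxp => by
      have : ε / 2 ≤ dist x p := hx.2
      rw [hxp, dist_self] at this
      linarith)
  have hM : 0 ≤ M := (norm_nonneg _).trans (hγ' t₀ le_rfl)
  set Δ := ε / (2 * M + 2)
  have hΔ : 0 < Δ := by positivity
  have hMΔ : M * Δ ≤ ε / 2 := by
    rw [mul_div_assoc', div_le_div_iff₀ (by positivity) two_pos]
    nlinarith
  refine ⟨δ * Δ, mul_pos hδ hΔ, Δ, hΔ, fun t ht hfar => ?_⟩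
  have hstep : ∀ u ∈ Icc t (t + Δ), ‖γ u - γ t‖ ≤ M * (u - t) :=
    norm_image_sub_le_of_norm_deriv_le_segment'
      (fun u hu => (hγ u (ht.trans hu.1)).hasDerivWithinAt) fun u hu => hγ' u (ht.trans hu.1)
  have hnear : ∀ u ∈ Icc t (t + Δ), γ u ∈ K' := fun u hu => by
    refine ⟨hγK u (ht.trans hu.1), ?_⟩
    have hMu : M * (u - t) ≤ M * Δ := mul_le_mul_of_nonneg_left (by linarith [hu.2]) hM
    have htri := dist_triangle_left (γ t) p (γ u)
    rw [dist_eq_norm (γ u) (γ t)] at htri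
    show ε / 2 ≤ dist (γ u) p
    linarith [hstep u hu]
  have hdrop := sub_le_mul_sub_of_hasDerivAt_le (a := t) (b := t + Δ) (C := -δ) (by linarith)
    (fun u hu => hV u (ht.trans hu.1))
    fun u hu => by linarith [hδW _ (hnear u (Ioo_subset_Icc_self hu))]
  linarith

/-- Once `V ∘ γ` is within `η` of its infimum, one more visit `ε`-far from `p` would push it
below the infimum. -/
theorem tendsto_of_antitoneOn_lyapunov (hK : IsCompact K) (hγK : ∀ t ≥ t₀, γ t ∈ K)
    (hγ : ∀ t ≥ t₀, HasDerivAt γ (γ' t) t) (hγ' : ∀ t ≥ t₀, ‖γ' t‖ ≤ M)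
    (hV : ∀ t ≥ t₀, HasDerivAt (fun t => V (γ t)) (W (γ t)) t)
    (hanti : AntitoneOn (fun t => V (γ t)) (Ici t₀)) (hVK : ContinuousOn V K)
    (hWK : ContinuousOn W K) (hWneg : ∀ x ∈ K, x ≠ p → W x < 0) :
    Tendsto γ atTop (𝓝 p) := by
  rw [Metric.tendsto_atTop]
  intro ε hε
  obtain ⟨η, hη, Δ, hΔ, hdrop⟩ :=
    exists_uniform_drop_of_le_dist hK hγK hγ hγ' hV hWK hWneg hε
  set S := (fun t => V (γ t)) '' Ici t₀
  have hS : BddBelow S :=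
    (hK.bddBelow_image hVK).mono (by rintro _ ⟨t, ht, rfl⟩; exact mem_image_of_mem V (hγK t ht))
  obtain ⟨_, ⟨t₁, ht₁, rfl⟩, hlt⟩ :=
    exists_lt_of_csInf_lt (nonempty_Ici.image _) (lt_add_of_pos_right (sInf S) hη)
  refine ⟨t₁, fun t ht => ?_⟩
  by_contra! hfar
  have ht₀ : t₀ ≤ t := le_trans ht₁ ht
  have hinf : sInf S ≤ V (γ (t + Δ)) :=
    csInf_le hS (mem_image_of_mem _ (mem_Ici.2 (by linarith)))
  linarith [hdrop t ht₀ hfar, hanti ht₁ ht₀ ht]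

end Lyapunov

section SafeGradientFlow

variable {n : ℕ} {J h : EuclideanSpace ℝ (Fin n) → ℝ} {c : ℝ} {x : EuclideanSpace ℝ (Fin n)}

/-- The `λ` of `F = -∇J + λ ∇h`; it is `0` where `∇h = 0`, because `a / 0 = 0`. -/
noncomputable def safeMultiplier (J h : EuclideanSpace ℝ (Fin n) → ℝ) (c : ℝ)
    (x : EuclideanSpace ℝ (Fin n)) : ℝ :=
  max (⟪gradient J x, gradient h x⟫ - c * h x) 0 / ‖gradient h x‖ ^ 2

theorem Fvec_eq_neg_add_smul (x : EuclideanSpace ℝ (Fin n)) :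
    Fvec J h c x = -gradient J x + safeMultiplier J h c x • gradient h x := by
  unfold Fvec safeMultiplier
  split_ifs with h0 <;> simp [h0]

theorem safeMultiplier_nonneg : 0 ≤ safeMultiplier J h c x := by
  unfold safeMultiplier
  positivity

theorem safeMultiplier_mul_norm_sq (hx : gradient h x ≠ 0) :
    safeMultiplier J h c x * ‖gradient h x‖ ^ 2 =
      max (⟪gradient J x, gradient h x⟫ - c * h x) 0 :=
  div_mul_cancel₀ _ (by positivity)

theorem neg_mul_le_inner_gradient_Fvec (hx : gradient h x ≠ 0) :
    -(c * h x) ≤ ⟪gradient h x, Fvec J h c x⟫ := by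
  rw [Fvec_eq_neg_add_smul, inner_add_right, inner_neg_right, real_inner_smul_right,
    real_inner_self_eq_norm_sq, safeMultiplier_mul_norm_sq hx, real_inner_comm]
  linarith [le_max_left (⟪gradient J x, gradient h x⟫ - c * h x) 0]

theorem safeMultiplier_mul_slack_eq_zero :
    safeMultiplier J h c x *
      (safeMultiplier J h c x * ‖gradient h x‖ ^ 2 - ⟪gradient J x, gradient h x⟫ + c * h x)
      = 0 := by
  by_cases hv : gradient h x = 0
  · simp [safeMultiplier, hv]
  rw [safeMultiplier_mul_norm_sq hv]
  rcases le_total (⟪gradient J x, gradient h x⟫ - c * h x) 0 with hle | hge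
  · simp only [safeMultiplier, max_eq_right hle, zero_div, zero_mul]
  · rw [max_eq_left hge]
    ring

theorem inner_gradient_Fvec_eq :
    ⟪gradient J x, Fvec J h c x⟫ =
      -‖Fvec J h c x‖ ^ 2 - safeMultiplier J h c x * (c * h x) := by
  rw [Fvec_eq_neg_add_smul, norm_add_sq_real, inner_add_right, inner_neg_right, inner_neg_left,
    real_inner_smul_right, real_inner_self_eq_norm_sq, norm_neg, norm_smul, Real.norm_eq_abs,
    abs_of_nonneg safeMultiplier_nonneg]
  linear_combination (safeMultiplier_mul_slack_eq_zero (J := J) (h := h) (c := c) (x := x))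

theorem inner_gradient_Fvec_nonpos (hc : 0 ≤ c) (hx : 0 ≤ h x) :
    ⟪gradient J x, Fvec J h c x⟫ ≤ 0 := by
  have hμ : 0 ≤ safeMultiplier J h c x := safeMultiplier_nonneg
  rw [inner_gradient_Fvec_eq]
  nlinarith [mul_nonneg hμ (mul_nonneg hc hx), sq_nonneg ‖Fvec J h c x‖]

theorem kkt_of_inner_gradient_Fvec_eq_zero (hc : 0 < c) (hx : 0 ≤ h x)
    (h0 : ⟪gradient J x, Fvec J h c x⟫ = 0) :
    gradient J x = 0 ∨
      h x = 0 ∧ ⟪gradient h x, gradient J x⟫ = ‖gradient h x‖ * ‖gradient J x‖ := by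
  set μ := safeMultiplier J h c x
  have hμ : 0 ≤ μ := safeMultiplier_nonneg
  rw [inner_gradient_Fvec_eq] at h0
  have hslack : 0 ≤ μ * (c * h x) := mul_nonneg hμ (mul_nonneg hc.le hx)
  have hF : Fvec J h c x = 0 := by
    rw [← norm_eq_zero]
    nlinarith [sq_nonneg ‖Fvec J h c x‖]
  have hgrad : gradient J x = μ • gradient h x := by
    rw [Fvec_eq_neg_add_smul, neg_add_eq_zero] at hF
    exact hF
  rcases hμ.eq_or_lt with hμ0 | hμpos
  · left
    rw [hgrad, ← hμ0, zero_smul]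
  · right
    refine ⟨?_, ?_⟩
    · nlinarith [mul_pos hμpos hc]
    · rw [hgrad, real_inner_smul_right, real_inner_self_eq_norm_sq, norm_smul, Real.norm_eq_abs,
        abs_of_pos hμpos]
      ring

theorem continuousAt_safeMultiplier (hJ : Continuous (gradient J))
    (hh : Continuous (gradient h)) (hhc : Continuous h) (hx : gradient h x ≠ 0 ∨ 0 < c * h x) :
    ContinuousAt (safeMultiplier J h c) x := by
  have hcont : Continuous fun y => ⟪gradient J y, gradient h y⟫ - c * h y :=
    (hJ.inner hh).sub (continuous_const.mul hhc)
  by_cases hv : gradient h x = 0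
  · have hneg : ∀ᶠ y in 𝓝 x, ⟪gradient J y, gradient h y⟫ - c * h y < 0 :=
      hcont.continuousAt.eventually_lt continuousAt_const (by
        rw [hv, inner_zero_right]
        linarith [hx.resolve_left (not_not.2 hv)])
    exact (continuousAt_const (y := (0 : ℝ))).congr (hneg.mono fun y hy => by
      simp only [safeMultiplier, max_eq_right hy.le, zero_div])
  · exact (hcont.max continuous_const).continuousAt.div (hh.norm.pow 2).continuousAt
      (by positivity)

theorem continuousAt_Fvec (hJ : Continuous (gradient J)) (hh : Continuous (gradient h))
    (hhc : Continuous h) (hx : gradient h x ≠ 0 ∨ 0 < c * h x) :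
    ContinuousAt (Fvec J h c) x := by
  rw [show Fvec J h c = _ from funext Fvec_eq_neg_add_smul]
  exact hJ.continuousAt.neg.add
    ((continuousAt_safeMultiplier hJ hh hhc hx).smul hh.continuousAt)

end SafeGradientFlow

theorem stmt6_general {n : ℕ} (J h : EuclideanSpace ℝ (Fin n) → ℝ) (c : ℝ) (hc : 0 < c)
    (θc : EuclideanSpace ℝ (Fin n))
    (hJ : ContDiff ℝ 1 J)
    (hh : ContDiff ℝ 1 h)
    (hA1 : 0 ≤ h θc ∧ (∀ θ, 0 ≤ h θ → θ ≠ θc → J θc < J θ) ∧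
      (∀ θ, 0 ≤ h θ → gradient J θ = 0 → θ = θc))
    (hA2 : (∃ θ, 0 ≤ h θ) ∧ ∀ ρ ∈ Set.range h, ρ ≤ 0 →
      ∃ L > 0, ∀ θ, h θ ≤ 0 → ρ ≤ h θ → L < ‖gradient h θ‖)
    (hA3 : ∀ θ, h θ = 0 →
      ⟪gradient h θ, gradient J θ⟫ = ‖gradient h θ‖ * ‖gradient J θ‖ → θ = θc) :
    ∀ (t₀ : ℝ) (θ : ℝ → EuclideanSpace ℝ (Fin n)),
      (∀ t ≥ t₀, HasDerivAt θ (Fvec J h c (θ t)) t) → 0 ≤ h (θ t₀) →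
      (∀ t ≥ t₀, 0 ≤ h (θ t)) ∧
      AntitoneOn (fun t => J (θ t)) (Set.Ici t₀) ∧
      (∀ t₁ t₂, t₀ ≤ t₁ → t₁ < t₂ → (∀ t ∈ Set.Icc t₁ t₂, θ t ≠ θc) →
        J (θ t₂) < J (θ t₁)) ∧
      (Bornology.IsBounded (θ '' Set.Ici t₀) →
        Filter.Tendsto θ Filter.atTop (nhds θc)) := by
  intro t₀ θ hθ hθ₀
  have hgh : ∀ x, h x ≤ 0 → gradient h x ≠ 0 := fun x hx hx0 => by
    obtain ⟨L, hL, hLx⟩ := hA2.2 (h x) ⟨x, rfl⟩ hx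
    simpa [hx0, hL.not_gt] using hLx x hx le_rfl
  have hJθ (t : ℝ) (ht : t ≥ t₀) :
      HasDerivAt (fun s => J (θ s)) ⟪gradient J (θ t), Fvec J h c (θ t)⟫ t :=
    hasDerivAt_comp_of_gradient (hJ.differentiable one_ne_zero (θ t)) (hθ t ht)
  have hsafe : ∀ t ≥ t₀, 0 ≤ h (θ t) :=
    nonneg_of_hasDerivAt_pos_of_neg
      (fun t ht => hasDerivAt_comp_of_gradient (hh.differentiable one_ne_zero (θ t)) (hθ t ht))
      hθ₀ fun t _ ht => (neg_pos.2 (mul_neg_of_pos_of_neg hc ht)).trans_le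
        (neg_mul_le_inner_gradient_Fvec (hgh _ ht.le))
  have hdecr : ∀ x, 0 ≤ h x → x ≠ θc → ⟪gradient J x, Fvec J h c x⟫ < 0 := fun x hx hxc =>
    (inner_gradient_Fvec_nonpos hc.le hx).lt_of_ne fun h0 => hxc <|
      (kkt_of_inner_gradient_Fvec_eq_zero hc hx h0).elim (hA1.2.2 x hx)
        fun hkkt => hA3 x hkkt.1 hkkt.2
  have hanti : AntitoneOn (fun t => J (θ t)) (Ici t₀) :=
    antitoneOn_of_hasDerivAt_nonpos (convex_Ici t₀) hJθ fun t ht =>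
      inner_gradient_Fvec_nonpos hc.le (hsafe t (interior_subset ht))
  refine ⟨hsafe, hanti, fun t₁ t₂ h₁ h₁₂ havoid => ?_, fun hbdd => ?_⟩
  · refine strictAntiOn_of_hasDerivAt_neg (convex_Icc t₁ t₂) (fun t ht => hJθ t (h₁.trans ht.1))
      (fun t ht => ?_) ⟨le_rfl, h₁₂.le⟩ ⟨h₁₂.le, le_rfl⟩ h₁₂
    have ht := interior_subset ht
    exact hdecr _ (hsafe t (h₁.trans ht.1)) (havoid t ht)
  · set K := closure (θ '' Ici t₀)
    have hθK : ∀ t ≥ t₀, θ t ∈ K := fun t ht => subset_closure ⟨t, ht, rfl⟩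
    have hKsafe : ∀ x ∈ K, 0 ≤ h x := closure_minimal (by rintro _ ⟨t, ht, rfl⟩; exact hsafe t ht)
      (isClosed_le continuous_const hh.continuous)
    have hFK : ∀ x ∈ K, ContinuousAt (Fvec J h c) x := fun x hx =>
      continuousAt_Fvec hJ.continuous_gradient hh.continuous_gradient hh.continuous <|
        (hKsafe x hx).eq_or_lt.imp (fun h0 => hgh x h0.ge) (mul_pos hc)
    obtain ⟨M, hM⟩ := hbdd.isCompact_closure.exists_bound_of_continuousOn
      fun x hx => (hFK x hx).continuousWithinAt
    exact tendsto_of_antitoneOn_lyapunov hbdd.isCompact_closure hθK hθ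
      (fun t ht => hM _ (hθK t ht)) hJθ hanti hJ.continuous.continuousOn
      (fun x hx => (hJ.continuous_gradient.continuousAt.inner (hFK x hx)).continuousWithinAt)
      fun x hx => hdecr x (hKsafe x hx)

/-- Lemma 1, flow form: under (A1)–(A3), any solution of θ' = F(θ) starting
in the safe set C stays in C, J(θ(t)) is nonincreasing and strictly decreasing on every
interval avoiding θ*_c, and bounded trajectories converge to θ*_c. -/
theorem stmt6 {n : ℕ} (hn : 1 ≤ n) (J h : EuclideanSpace ℝ (Fin n) → ℝ) (c : ℝ) (hc : 0 < c)
    (θc : EuclideanSpace ℝ (Fin n))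
    (hJ : ContDiff ℝ 1 J) (hJ' : LocallyLipschitz (gradient J))
    (hh : ContDiff ℝ 1 h) (hh' : LocallyLipschitz (gradient h))
    (hA1 : 0 ≤ h θc ∧ (∀ θ, 0 ≤ h θ → θ ≠ θc → J θc < J θ) ∧
      (∀ θ, 0 ≤ h θ → gradient J θ = 0 → θ = θc))
    (hA2 : (∃ θ, 0 ≤ h θ) ∧ ∀ ρ ∈ Set.range h, ρ ≤ 0 →
      ∃ L > 0, ∀ θ, h θ ≤ 0 → ρ ≤ h θ → L < ‖gradient h θ‖)
    (hA3 : ∀ θ, h θ = 0 →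
      ⟪gradient h θ, gradient J θ⟫ = ‖gradient h θ‖ * ‖gradient J θ‖ → θ = θc) :
    ∀ (t₀ : ℝ) (θ : ℝ → EuclideanSpace ℝ (Fin n)),
      (∀ t ≥ t₀, HasDerivAt θ (Fvec J h c (θ t)) t) → 0 ≤ h (θ t₀) →
      (∀ t ≥ t₀, 0 ≤ h (θ t)) ∧
      AntitoneOn (fun t => J (θ t)) (Set.Ici t₀) ∧
      (∀ t₁ t₂, t₀ ≤ t₁ → t₁ < t₂ → (∀ t ∈ Set.Icc t₁ t₂, θ t ≠ θc) →
        J (θ t₂) < J (θ t₁)) ∧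
      (Bornology.IsBounded (θ '' Set.Ici t₀) →
        Filter.Tendsto θ Filter.atTop (nhds θc)) :=
  stmt6_general J h c hc θc hJ hh hA1 hA2 hA3
end

section
/- (Lemma 2, Lyapunov function.) Suppose (A1), (A2), (A3) hold, and suppose in addition that either both (A4) and (A5) hold, or (A6) holds. Then for every ρ ≤ 0 in the image of h there exists α > 0 such that, along every differentiable solution θ : [t₀, ∞) → ℝⁿ of θ′(t) = F(θ(t)) whose trajectory stays in C_ρ, the function t ↦ max{−α·h(θ(t)), 0} + max{J(θ(t)) − J(θ*_c), 0} is nonincreasing and is strictly decreasing on every interval on which θ(t) ≠ θ*_c. -/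
/-!
Off the safe set the barrier term `max (-α h) 0` decreases along `F` at rate at least `α c (-h)`,
since `⟪∇h, F⟫ ≥ -c h` everywhere. The cost `J` may increase there, but only at a rate `c (-h) B`:
near `θ*_c` because `‖∇J‖` is bounded on a compact set while `‖∇h‖ > L`, and far from `θ*_c`
because the angle condition (A4) bounds the increase by `(c h)² / (4 L² (1 - f*²))`. Any `α > B`
makes `V` decrease. On the safe set the barrier term is flat and `F` is a descent direction for `J`,
strictly so away from `θ*_c` by (A1) and (A3). As `V` is only right-differentiable, monotonicity
comes from a comparison theorem for right derivatives.
-/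

open scoped RealInnerProductSpace
open Set Filter

open Topology

noncomputable def maxZeroRightDeriv (y y' : ℝ) : ℝ :=
  if 0 < y then y' else if y = 0 then max y' 0 else 0

lemma maxZeroRightDeriv_of_pos {y y' : ℝ} (hy : 0 < y) : maxZeroRightDeriv y y' = y' :=
  if_pos hy

lemma maxZeroRightDeriv_le_max (y y' : ℝ) : maxZeroRightDeriv y y' ≤ max y' 0 := by
  unfold maxZeroRightDeriv
  split_ifs
  exacts [le_max_left _ _, le_rfl, le_max_right _ _]

lemma maxZeroRightDeriv_nonpos {y y' : ℝ} (hy : y ≤ 0) (hy' : y = 0 → y' ≤ 0) :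
    maxZeroRightDeriv y y' ≤ 0 := by
  unfold maxZeroRightDeriv
  split_ifs with hpos hzero
  exacts [absurd hpos hy.not_gt, (max_eq_right (hy' hzero)).le, le_rfl]

lemma HasDerivAt.hasDerivWithinAt_Ici_max_zero {f : ℝ → ℝ} {f' x : ℝ} (hf : HasDerivAt f f' x) :
    HasDerivWithinAt (fun z => max (f z) 0) (maxZeroRightDeriv (f x) f') (Ici x) x := by
  unfold maxZeroRightDeriv
  split_ifs with hpos hzero
  · have hev : ∀ᶠ z in 𝓝 x, 0 < f z := continuousAt_const.eventually_lt hf.continuousAt hpos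
    exact (hf.congr_of_eventuallyEq (hev.mono fun z hz => max_eq_left hz.le)).hasDerivWithinAt
  · -- to the right of `x`, the slope of `max (f ·) 0` is the positive part of the slope of `f`
    have hslope : ∀ z ∈ Ioi x, max (slope f x z) 0 = slope (fun z => max (f z) 0) x z := by
      intro z hz
      have hzx : 0 ≤ z - x := (sub_pos.2 hz).le
      rw [slope_def_field, slope_def_field, hzero, max_self, sub_zero, sub_zero]
      rcases le_total (f z) 0 with hfz | hfz
      · rw [max_eq_right hfz, max_eq_right (div_nonpos_of_nonpos_of_nonneg hfz hzx), zero_div]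
      · rw [max_eq_left hfz, max_eq_left (div_nonneg hfz hzx)]
    refine HasDerivWithinAt.Ici_of_Ioi <| (hasDerivWithinAt_iff_tendsto_slope' (lt_irrefl x)).2 ?_
    exact (((hasDerivWithinAt_iff_tendsto_slope' (lt_irrefl x)).1 hf.hasDerivWithinAt).max
      tendsto_const_nhds).congr' (eventually_nhdsWithin_of_forall hslope)
  · have hev : ∀ᶠ z in 𝓝 x, f z < 0 :=
      hf.continuousAt.eventually_lt continuousAt_const (lt_of_le_of_ne (not_lt.1 hpos) hzero)
    exact ((hasDerivAt_const x (0 : ℝ)).congr_of_eventuallyEq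
      (hev.mono fun z hz => max_eq_right hz.le)).hasDerivWithinAt

lemma antitoneOn_Ici_of_hasDerivWithinAt_Ici_nonpos {f D : ℝ → ℝ} {a : ℝ}
    (hf : ContinuousOn f (Ici a)) (hD : ∀ t ∈ Ici a, HasDerivWithinAt f (D t) (Ici t) t)
    (hD0 : ∀ t ∈ Ici a, D t ≤ 0) : AntitoneOn f (Ici a) := by
  intro x hx y hy hxy
  have hsub : Icc x y ⊆ Ici a := Icc_subset_Ici_iff hxy |>.2 hx
  exact image_le_of_deriv_right_le_deriv_boundary (B := fun _ => f x) (hf.mono hsub)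
    (fun t ht => hD t (hsub (Ico_subset_Icc_self ht))) le_rfl continuousOn_const
    (fun t _ => hasDerivWithinAt_const t _ (f x))
    (fun t ht => hD0 t (hsub (Ico_subset_Icc_self ht))) ⟨hxy, le_rfl⟩

lemma AntitoneOn.lt_of_hasDerivWithinAt_Ici_neg {f : ℝ → ℝ} {D a t₁ t₂ : ℝ}
    (hf : AntitoneOn f (Ici a)) (ht₁ : a ≤ t₁) (hD : HasDerivWithinAt f D (Ici t₁) t₁)
    (hD0 : D < 0) (h12 : t₁ < t₂) : f t₂ < f t₁ := by
  obtain ⟨z, hz, hzt₁, hzt₂⟩ :=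
    ((hD.Ioi_of_Ici.limsup_slope_le' (lt_irrefl t₁) hD0).and (Ioo_mem_nhdsGT h12)).exists
  calc f t₂ ≤ f z := hf (ht₁.trans hzt₁.le) (ht₁.trans h12.le) hzt₂.le
    _ < f t₁ := (slope_neg_iff_of_le hzt₁.le).1 hz

section SafeDirection

variable {E : Type*} [NormedAddCommGroup E] [InnerProductSpace ℝ E] {g k : E} {a : ℝ}

/-- For `k = 0` the junk value `x / 0 = 0` makes this `-g`, so `Fvec` is `safeDirection` on both
of its branches (`Fvec_eq_safeDirection`). -/
noncomputable def safeDirection (g k : E) (a : ℝ) : E :=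
  -g + (max (⟪g, k⟫ - a) 0 / ‖k‖ ^ 2) • k

lemma neg_le_inner_safeDirection (hk : k ≠ 0) : -a ≤ ⟪k, safeDirection g k a⟫ := by
  rw [safeDirection, inner_add_right, inner_neg_right, real_inner_smul_right,
    real_inner_self_eq_norm_sq, div_mul_cancel₀ _ (by positivity), real_inner_comm]
  linarith [le_max_left (⟪g, k⟫ - a) 0]

lemma inner_safeDirection_of_le (hga : ⟪g, k⟫ ≤ a) :
    ⟪g, safeDirection g k a⟫ = -‖g‖ ^ 2 := by
  rw [safeDirection, inner_add_right, inner_neg_right, real_inner_smul_right,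
    real_inner_self_eq_norm_sq, max_eq_right (sub_nonpos.2 hga), zero_div, zero_mul, add_zero]

lemma inner_safeDirection_of_lt (hag : a < ⟪g, k⟫) :
    ⟪g, safeDirection g k a⟫ = -‖g‖ ^ 2 + (⟪g, k⟫ - a) * ⟪g, k⟫ / ‖k‖ ^ 2 := by
  rw [safeDirection, inner_add_right, inner_neg_right, real_inner_smul_right,
    real_inner_self_eq_norm_sq, max_eq_left (sub_pos.2 hag).le, div_mul_eq_mul_div]

lemma inner_safeDirection_nonpos (ha : 0 ≤ a) : ⟪g, safeDirection g k a⟫ ≤ 0 := by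
  rcases le_or_gt ⟪g, k⟫ a with hga | hag
  · rw [inner_safeDirection_of_le hga]
    exact neg_nonpos.2 (sq_nonneg _)
  have hCS := real_inner_le_norm g k
  have hk : 0 < ‖k‖ := by
    by_contra! hk
    nlinarith [norm_nonneg g, norm_nonneg k]
  rw [inner_safeDirection_of_lt hag, neg_add_nonpos_iff, div_le_iff₀ (by positivity)]
  nlinarith

lemma inner_safeDirection_neg (ha : 0 ≤ a) (hg : g ≠ 0)
    (hstrict : 0 < a ∨ ⟪g, k⟫ < ‖g‖ * ‖k‖) : ⟪g, safeDirection g k a⟫ < 0 := by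
  rcases le_or_gt ⟪g, k⟫ a with hga | hag
  · rw [inner_safeDirection_of_le hga]
    exact neg_neg_of_pos (by positivity)
  have hCS := real_inner_le_norm g k
  have hk : 0 < ‖k‖ := by
    by_contra! hk
    nlinarith [norm_nonneg g, norm_nonneg k]
  rw [inner_safeDirection_of_lt hag, neg_add_neg_iff, div_lt_iff₀ (by positivity)]
  rcases hstrict with hstrict | hstrict <;> nlinarith

lemma inner_safeDirection_le_mul_norm_div_norm (ha : a ≤ 0) (hk : k ≠ 0) :
    ⟪g, safeDirection g k a⟫ ≤ -a * (‖g‖ / ‖k‖) := by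
  have hRHS : 0 ≤ -a * (‖g‖ / ‖k‖) := by
    have := neg_nonneg.2 ha
    positivity
  rcases le_or_gt ⟪g, k⟫ a with hga | hag
  · rw [inner_safeDirection_of_le hga]
    linarith [sq_nonneg ‖g‖]
  have hk' : 0 < ‖k‖ := norm_pos_iff.2 hk
  have hCS := abs_real_inner_le_norm g k
  have hsq : ⟪g, k⟫ ^ 2 ≤ (‖g‖ * ‖k‖) ^ 2 := sq_le_sq' (abs_le.1 hCS).1 (abs_le.1 hCS).2
  rw [inner_safeDirection_of_lt hag, ← sub_nonneg]
  have : -a * (‖g‖ / ‖k‖) - (-‖g‖ ^ 2 + (⟪g, k⟫ - a) * ⟪g, k⟫ / ‖k‖ ^ 2)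
      = ((‖g‖ * ‖k‖) ^ 2 - ⟪g, k⟫ ^ 2 + -a * (‖g‖ * ‖k‖ - ⟪g, k⟫)) / ‖k‖ ^ 2 := by
    field_simp
    ring
  rw [this]
  apply div_nonneg _ (by positivity)
  nlinarith [(abs_le.1 hCS).2, neg_nonneg.2 ha]

lemma inner_safeDirection_le_of_inner_le {f : ℝ} (ha : a ≤ 0) (hk : k ≠ 0) (hf0 : 0 ≤ f)
    (hf1 : f < 1) (hangle : ⟪g, k⟫ ≤ f * (‖g‖ * ‖k‖)) :
    ⟪g, safeDirection g k a⟫ ≤ a ^ 2 / (4 * ‖k‖ ^ 2 * (1 - f ^ 2)) := by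
  have hk' : 0 < ‖k‖ := norm_pos_iff.2 hk
  have hf2 : 0 < 1 - f ^ 2 := by nlinarith
  have hRHS : 0 ≤ a ^ 2 / (4 * ‖k‖ ^ 2 * (1 - f ^ 2)) := by positivity
  rcases le_or_gt ⟪g, k⟫ a with hga | hag
  · rw [inner_safeDirection_of_le hga]
    linarith [sq_nonneg ‖g‖]
  rw [inner_safeDirection_of_lt hag]
  rcases le_or_gt ⟪g, k⟫ 0 with hs | hs
  · have : (⟪g, k⟫ - a) * ⟪g, k⟫ / ‖k‖ ^ 2 ≤ 0 :=
      div_nonpos_of_nonpos_of_nonneg (mul_nonpos_of_nonneg_of_nonpos (by linarith) hs)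
        (by positivity)
    linarith [sq_nonneg ‖g‖]
  -- with `P = ‖g‖ ‖k‖`, this is `-(1 - f²) P² - a P ≤ a² / (4 (1 - f²))` (complete the square)
  set P := ‖g‖ * ‖k‖ with hP
  have hsq : ⟪g, k⟫ ^ 2 ≤ f ^ 2 * P ^ 2 := by nlinarith
  have haP : a * P ≤ a * ⟪g, k⟫ :=
    mul_le_mul_of_nonpos_left (hangle.trans (mul_le_of_le_one_left (by positivity) hf1.le)) ha
  have hsquare : -(1 - f ^ 2) * P ^ 2 - a * P ≤ a ^ 2 / (4 * (1 - f ^ 2)) := by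
    rw [le_div_iff₀ (by positivity)]
    nlinarith [sq_nonneg (2 * (1 - f ^ 2) * P + a)]
  rw [← sub_nonneg]
  have : a ^ 2 / (4 * ‖k‖ ^ 2 * (1 - f ^ 2)) - (-‖g‖ ^ 2 + (⟪g, k⟫ - a) * ⟪g, k⟫ / ‖k‖ ^ 2)
      = (a ^ 2 / (4 * (1 - f ^ 2)) + P ^ 2 - ⟪g, k⟫ ^ 2 + a * ⟪g, k⟫) / ‖k‖ ^ 2 := by
    rw [hP]
    field_simp
    ring
  rw [this]
  apply div_nonneg _ (by positivity)
  linarith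

end SafeDirection

lemma HasGradientAt.comp_hasDerivAt {E : Type*} [NormedAddCommGroup E] [InnerProductSpace ℝ E]
    [CompleteSpace E] {f : E → ℝ} {f' v : E} {γ : ℝ → E} {t : ℝ}
    (hf : HasGradientAt f f' (γ t)) (hγ : HasDerivAt γ v t) :
    HasDerivAt (fun s => f (γ s)) ⟪f', v⟫ t :=
  (hasGradientAt_iff_hasFDerivAt.1 hf).comp_hasDerivAt t hγ

section SafeGradientFlow

variable {n : ℕ} {J h : EuclideanSpace ℝ (Fin n) → ℝ} {c α : ℝ} {θc x : EuclideanSpace ℝ (Fin n)}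

lemma Fvec_eq_safeDirection (x : EuclideanSpace ℝ (Fin n)) :
    Fvec J h c x = safeDirection (gradient J x) (gradient h x) (c * h x) := by
  unfold Fvec safeDirection
  split_ifs with hk
  · simp [hk]
  · rfl

lemma exists_inner_gradient_Fvec_lt {ρ L f : ℝ} {K : Set (EuclideanSpace ℝ (Fin n))}
    (hc : 0 < c) (hρ : ρ ≤ 0) (hJ : Continuous (gradient J)) (hK : IsCompact K) (hL : 0 < L)
    (hf0 : 0 ≤ f) (hf1 : f < 1) (hgrad : ∀ x, h x ≤ 0 → ρ ≤ h x → L < ‖gradient h x‖)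
    (hfar : ∀ x, ρ ≤ h x → h x < 0 → x ∉ K →
      ⟪gradient J x, gradient h x⟫ ≤ f * (‖gradient J x‖ * ‖gradient h x‖)) :
    ∃ α > 0, ∀ x, ρ ≤ h x → h x < 0 → ⟪gradient J x, Fvec J h c x⟫ < α * (c * -h x) := by
  obtain ⟨M, hM⟩ := hK.exists_bound_of_continuousOn hJ.continuousOn
  have hf2 : 0 < 1 - f ^ 2 := by nlinarith
  set B := max M 0 / L + c * -ρ / (4 * L ^ 2 * (1 - f ^ 2))
  have hB : 0 ≤ B := by
    have := neg_nonneg.2 hρ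
    positivity
  refine ⟨1 + B, by positivity, fun x hρx hx => ?_⟩
  have hLk : L < ‖gradient h x‖ := hgrad x hx.le hρx
  have hk : gradient h x ≠ 0 := norm_pos_iff.1 (hL.trans hLk)
  have ha : c * h x ≤ 0 := mul_nonpos_of_nonneg_of_nonpos hc.le hx.le
  have hpos : 0 < c * -h x := mul_pos hc (neg_pos.2 hx)
  suffices hle : ⟪gradient J x, Fvec J h c x⟫ ≤ c * -h x * B by nlinarith
  rw [Fvec_eq_safeDirection]
  by_cases hxK : x ∈ K
  · calc _ ≤ -(c * h x) * (‖gradient J x‖ / ‖gradient h x‖) :=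
          inner_safeDirection_le_mul_norm_div_norm ha hk
      _ ≤ c * -h x * (max M 0 / L) := by
          rw [← mul_neg]
          gcongr
          exact (hM x hxK).trans (le_max_left M 0)
      _ ≤ c * -h x * B := by
          gcongr
          exact le_add_of_nonneg_right (by have := neg_nonneg.2 hρ; positivity)
  · calc _ ≤ (c * h x) ^ 2 / (4 * ‖gradient h x‖ ^ 2 * (1 - f ^ 2)) :=
          inner_safeDirection_le_of_inner_le ha hk hf0 hf1 (hfar x hρx hx hxK)
      _ = c * -h x * (c * -h x / (4 * ‖gradient h x‖ ^ 2 * (1 - f ^ 2))) := by ring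
      _ ≤ c * -h x * (c * -ρ / (4 * L ^ 2 * (1 - f ^ 2))) := by
          gcongr
          exact mul_nonneg hc.le (neg_nonneg.2 hρ)
      _ ≤ c * -h x * B := by
          gcongr
          exact le_add_of_nonneg_left (by positivity)

noncomputable def lyapunov (J h : EuclideanSpace ℝ (Fin n) → ℝ) (α : ℝ)
    (θc x : EuclideanSpace ℝ (Fin n)) : ℝ :=
  max (-(α * h x)) 0 + max (J x - J θc) 0

lemma continuous_lyapunov (hJ : Continuous J) (hh : Continuous h) :
    Continuous (lyapunov J h α θc) :=
  (((continuous_const.mul hh).neg).max continuous_const).add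
    ((hJ.sub continuous_const).max continuous_const)

noncomputable def lyapunovRightDeriv (J h : EuclideanSpace ℝ (Fin n) → ℝ) (c α : ℝ)
    (θc x : EuclideanSpace ℝ (Fin n)) : ℝ :=
  maxZeroRightDeriv (-(α * h x)) (-(α * ⟪gradient h x, Fvec J h c x⟫)) +
    maxZeroRightDeriv (J x - J θc) ⟪gradient J x, Fvec J h c x⟫

lemma hasDerivWithinAt_lyapunov_comp (hJ : Differentiable ℝ J) (hh : Differentiable ℝ h)
    {θ : ℝ → EuclideanSpace ℝ (Fin n)} {t : ℝ} (hθ : HasDerivAt θ (Fvec J h c (θ t)) t) :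
    HasDerivWithinAt (fun s => lyapunov J h α θc (θ s)) (lyapunovRightDeriv J h c α θc (θ t))
      (Ici t) t :=
  ((((hh _).hasGradientAt.comp_hasDerivAt hθ).const_mul α).neg.hasDerivWithinAt_Ici_max_zero).add
    (((hJ _).hasGradientAt.comp_hasDerivAt hθ).sub_const (J θc)).hasDerivWithinAt_Ici_max_zero

lemma lyapunovRightDeriv_neg_of_neg (hc : 0 < c) (hα : 0 < α) (hx : h x < 0)
    (hk : gradient h x ≠ 0) (hJF : ⟪gradient J x, Fvec J h c x⟫ < α * (c * -h x)) :
    lyapunovRightDeriv J h c α θc x < 0 := by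
  have hhF : c * -h x ≤ ⟪gradient h x, Fvec J h c x⟫ := by
    rw [Fvec_eq_safeDirection, mul_neg]
    exact neg_le_inner_safeDirection hk
  have hJterm := maxZeroRightDeriv_le_max (J x - J θc) ⟪gradient J x, Fvec J h c x⟫
  have hJmax : max ⟪gradient J x, Fvec J h c x⟫ 0 < α * (c * -h x) :=
    max_lt hJF (by have := neg_pos.2 hx; positivity)
  rw [lyapunovRightDeriv, maxZeroRightDeriv_of_pos (by nlinarith)]
  nlinarith [mul_le_mul_of_nonneg_left hhF hα.le]

lemma lyapunovRightDeriv_le_of_nonneg (hα : 0 < α) (hx : 0 ≤ h x) :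
    lyapunovRightDeriv J h c α θc x ≤
      maxZeroRightDeriv (J x - J θc) ⟪gradient J x, Fvec J h c x⟫ := by
  have hbarrier : maxZeroRightDeriv (-(α * h x)) (-(α * ⟪gradient h x, Fvec J h c x⟫)) ≤ 0 := by
    refine maxZeroRightDeriv_nonpos (by nlinarith) fun hzero => ?_
    have hx0 : h x = 0 := by nlinarith
    -- on `∂C` the flow does not point out of `C`
    have hhF : 0 ≤ ⟪gradient h x, Fvec J h c x⟫ := by
      by_cases hk : gradient h x = 0
      · rw [hk, inner_zero_left]
      · simpa [Fvec_eq_safeDirection, hx0] using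
          neg_le_inner_safeDirection (g := gradient J x) (a := c * h x) hk
    nlinarith
  rw [lyapunovRightDeriv]
  linarith

lemma lyapunovRightDeriv_nonpos_of_nonneg (hc : 0 ≤ c) (hα : 0 < α) (hx : 0 ≤ h x) :
    lyapunovRightDeriv J h c α θc x ≤ 0 := by
  have hJF : ⟪gradient J x, Fvec J h c x⟫ ≤ 0 := by
    rw [Fvec_eq_safeDirection]
    exact inner_safeDirection_nonpos (mul_nonneg hc hx)
  calc _ ≤ maxZeroRightDeriv (J x - J θc) ⟪gradient J x, Fvec J h c x⟫ :=
        lyapunovRightDeriv_le_of_nonneg hα hx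
    _ ≤ max ⟪gradient J x, Fvec J h c x⟫ 0 := maxZeroRightDeriv_le_max _ _
    _ = 0 := max_eq_right hJF

lemma lyapunovRightDeriv_neg_of_nonneg (hc : 0 < c) (hα : 0 < α) (hx : 0 ≤ h x)
    (hJx : J θc < J x) (hgJ : gradient J x ≠ 0)
    (hbdry : h x = 0 → ⟪gradient h x, gradient J x⟫ ≠ ‖gradient h x‖ * ‖gradient J x‖) :
    lyapunovRightDeriv J h c α θc x < 0 := by
  have hstrict : 0 < c * h x ∨ ⟪gradient J x, gradient h x⟫ < ‖gradient J x‖ * ‖gradient h x‖ := by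
    rcases hx.lt_or_eq with hx | hx
    · exact Or.inl (mul_pos hc hx)
    · refine Or.inr (lt_of_le_of_ne (real_inner_le_norm _ _) fun e => hbdry hx.symm ?_)
      rw [real_inner_comm, e, mul_comm]
  have hJF : ⟪gradient J x, Fvec J h c x⟫ < 0 := by
    rw [Fvec_eq_safeDirection]
    exact inner_safeDirection_neg (mul_nonneg hc.le hx) hgJ hstrict
  calc _ ≤ maxZeroRightDeriv (J x - J θc) ⟪gradient J x, Fvec J h c x⟫ :=
        lyapunovRightDeriv_le_of_nonneg hα hx
    _ = ⟪gradient J x, Fvec J h c x⟫ := maxZeroRightDeriv_of_pos (sub_pos.2 hJx)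
    _ < 0 := hJF

variable {S : Set (EuclideanSpace ℝ (Fin n))} {θ : ℝ → EuclideanSpace ℝ (Fin n)} {t₀ : ℝ}

lemma antitoneOn_lyapunov_comp (hJ : Differentiable ℝ J) (hh : Differentiable ℝ h)
    (hθ : ∀ t ≥ t₀, HasDerivAt θ (Fvec J h c (θ t)) t) (hS : ∀ t ≥ t₀, θ t ∈ S)
    (hnonpos : ∀ x ∈ S, lyapunovRightDeriv J h c α θc x ≤ 0) :
    AntitoneOn (fun t => lyapunov J h α θc (θ t)) (Ici t₀) :=
  antitoneOn_Ici_of_hasDerivWithinAt_Ici_nonpos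
    (fun t ht => ((continuous_lyapunov hJ.continuous hh.continuous).continuousAt.comp
      (hθ t ht).continuousAt).continuousWithinAt)
    (fun t ht => hasDerivWithinAt_lyapunov_comp hJ hh (hθ t ht))
    fun t ht => hnonpos _ (hS t ht)

lemma lyapunov_comp_lt (hJ : Differentiable ℝ J) (hh : Differentiable ℝ h)
    (hθ : ∀ t ≥ t₀, HasDerivAt θ (Fvec J h c (θ t)) t) (hS : ∀ t ≥ t₀, θ t ∈ S)
    (hnonpos : ∀ x ∈ S, lyapunovRightDeriv J h c α θc x ≤ 0)
    (hneg : ∀ x ∈ S, x ≠ θc → lyapunovRightDeriv J h c α θc x < 0)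
    {t₁ t₂ : ℝ} (h01 : t₀ ≤ t₁) (h12 : t₁ < t₂) (hne : θ t₁ ≠ θc) :
    lyapunov J h α θc (θ t₂) < lyapunov J h α θc (θ t₁) :=
  (antitoneOn_lyapunov_comp hJ hh hθ hS hnonpos).lt_of_hasDerivWithinAt_Ici_neg h01
    (hasDerivWithinAt_lyapunov_comp hJ hh (hθ t₁ h01)) (hneg _ (hS t₁ h01) hne) h12

end SafeGradientFlow

theorem stmt11_general {n : ℕ} (J h : EuclideanSpace ℝ (Fin n) → ℝ) (c : ℝ) (hc : 0 < c)
    (θc : EuclideanSpace ℝ (Fin n))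
    (hJ : ContDiff ℝ 1 J) (hJ' : LocallyLipschitz (gradient J))
    (hh : ContDiff ℝ 1 h)
    (hA1 : 0 ≤ h θc ∧ (∀ θ, 0 ≤ h θ → θ ≠ θc → J θc < J θ) ∧
      (∀ θ, 0 ≤ h θ → gradient J θ = 0 → θ = θc))
    (hA2 : (∃ θ, 0 ≤ h θ) ∧ ∀ ρ ∈ Set.range h, ρ ≤ 0 →
      ∃ L > 0, ∀ θ, h θ ≤ 0 → ρ ≤ h θ → L < ‖gradient h θ‖)
    (hA3 : ∀ θ, h θ = 0 →
      ⟪gradient h θ, gradient J θ⟫ = ‖gradient h θ‖ * ‖gradient J θ‖ → θ = θc)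
    (hA456 :
      ((∃ rs > (0:ℝ), ∃ fs, 0 ≤ fs ∧ fs < 1 ∧ ∀ θ, h θ ≤ 0 → rs ≤ ‖θ - θc‖ →
          ⟪gradient J θ, gradient h θ⟫ ≤ fs * (‖gradient J θ‖ * ‖gradient h θ‖)) ∧
        ((∀ θ, θ ≠ θc → 0 < max (-h θ) 0 + max (J θ - J θc) 0) ∧
          max (-h θc) 0 + max (J θc - J θc) 0 = 0 ∧
          ∀ Mv : ℝ, ∃ R : ℝ, ∀ θ, R ≤ ‖θ - θc‖ →
            Mv ≤ max (-h θ) 0 + max (J θ - J θc) 0)) ∨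
      (∀ ρ ∈ Set.range h, ρ ≤ 0 →
        IsCompact {θ : EuclideanSpace ℝ (Fin n) | ρ ≤ h θ})) :
    ∀ ρ ∈ Set.range h, ρ ≤ 0 → ∃ α > (0:ℝ),
      ∀ (t₀ : ℝ) (θ : ℝ → EuclideanSpace ℝ (Fin n)),
        (∀ t ≥ t₀, HasDerivAt θ (Fvec J h c (θ t)) t) →
        (∀ t ≥ t₀, ρ ≤ h (θ t)) →
        AntitoneOn (fun t => max (-(α * h (θ t))) 0 + max (J (θ t) - J θc) 0)
          (Set.Ici t₀) ∧
        (∀ t₁ t₂, t₀ ≤ t₁ → t₁ < t₂ → (∀ t ∈ Set.Icc t₁ t₂, θ t ≠ θc) →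
          max (-(α * h (θ t₂))) 0 + max (J (θ t₂) - J θc) 0 <
            max (-(α * h (θ t₁))) 0 + max (J (θ t₁) - J θc) 0) := by
  obtain ⟨hθc, hJmin, hcrit⟩ := hA1
  intro ρ hρ hρ0
  obtain ⟨L, hL, hgrad⟩ := hA2.2 ρ hρ hρ0
  obtain ⟨α, hα, hrate⟩ : ∃ α > 0, ∀ x, ρ ≤ h x → h x < 0 →
      ⟪gradient J x, Fvec J h c x⟫ < α * (c * -h x) := by
    rcases hA456 with ⟨⟨r, -, f, hf0, hf1, hA4⟩, -⟩ | hA6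
    · have hK := (isCompact_closedBall θc r).inter_right
        (isClosed_le (continuous_const (y := ρ)) hh.continuous)
      refine exists_inner_gradient_Fvec_lt hc hρ0 hJ'.continuous hK hL hf0 hf1 hgrad
        fun x hρx hx hxK => hA4 x hx.le ?_
      rw [← dist_eq_norm]
      exact (not_le.1 fun hr => hxK ⟨hr, hρx⟩).le
    · exact exists_inner_gradient_Fvec_lt hc hρ0 hJ'.continuous (hA6 ρ hρ hρ0) hL le_rfl
        zero_lt_one hgrad fun x hρx _ hxK => absurd hρx hxK
  have hneg : ∀ x, ρ ≤ h x → x ≠ θc → lyapunovRightDeriv J h c α θc x < 0 := by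
    intro x hρx hne
    rcases lt_or_ge (h x) 0 with hx | hx
    · exact lyapunovRightDeriv_neg_of_neg hc hα hx
        (norm_pos_iff.1 (hL.trans (hgrad x hx.le hρx))) (hrate x hρx hx)
    · exact lyapunovRightDeriv_neg_of_nonneg hc hα hx (hJmin x hx hne)
        (fun h0 => hne (hcrit x hx h0)) fun hx0 e => hne (hA3 x hx0 e)
  have hnonpos : ∀ x, ρ ≤ h x → lyapunovRightDeriv J h c α θc x ≤ 0 := by
    intro x hρx
    rcases eq_or_ne x θc with rfl | hne
    · exact lyapunovRightDeriv_nonpos_of_nonneg hc.le hα hθc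
    · exact (hneg x hρx hne).le
  have hJd := hJ.differentiable one_ne_zero
  have hhd := hh.differentiable one_ne_zero
  exact ⟨α, hα, fun t₀ θ hθ hstay =>
    ⟨antitoneOn_lyapunov_comp hJd hhd hθ hstay hnonpos, fun t₁ t₂ h01 h12 hne =>
      lyapunov_comp_lt hJd hhd hθ hstay hnonpos hneg h01 h12 (hne t₁ ⟨le_rfl, h12.le⟩)⟩⟩

/-- Lemma 2, Lyapunov function: under (A1)–(A3) and either ((A4) and (A5))
or (A6), for every ρ ≤ 0 in the image of h there is α > 0 such that
`V(θ) = max{−α·h(θ),0} + max{J(θ)−J(θ*_c),0}` is nonincreasing (strictly decreasing away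
from θ*_c) along every solution of θ' = F(θ) that stays in C_ρ. -/
theorem stmt11 {n : ℕ} (hn : 1 ≤ n) (J h : EuclideanSpace ℝ (Fin n) → ℝ) (c : ℝ) (hc : 0 < c)
    (θc : EuclideanSpace ℝ (Fin n))
    (hJ : ContDiff ℝ 1 J) (hJ' : LocallyLipschitz (gradient J))
    (hh : ContDiff ℝ 1 h) (hh' : LocallyLipschitz (gradient h))
    (hA1 : 0 ≤ h θc ∧ (∀ θ, 0 ≤ h θ → θ ≠ θc → J θc < J θ) ∧
      (∀ θ, 0 ≤ h θ → gradient J θ = 0 → θ = θc))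
    (hA2 : (∃ θ, 0 ≤ h θ) ∧ ∀ ρ ∈ Set.range h, ρ ≤ 0 →
      ∃ L > 0, ∀ θ, h θ ≤ 0 → ρ ≤ h θ → L < ‖gradient h θ‖)
    (hA3 : ∀ θ, h θ = 0 →
      ⟪gradient h θ, gradient J θ⟫ = ‖gradient h θ‖ * ‖gradient J θ‖ → θ = θc)
    (hA456 :
      ((∃ rs > (0:ℝ), ∃ fs, 0 ≤ fs ∧ fs < 1 ∧ ∀ θ, h θ ≤ 0 → rs ≤ ‖θ - θc‖ →
          ⟪gradient J θ, gradient h θ⟫ ≤ fs * (‖gradient J θ‖ * ‖gradient h θ‖)) ∧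
        ((∀ θ, θ ≠ θc → 0 < max (-h θ) 0 + max (J θ - J θc) 0) ∧
          max (-h θc) 0 + max (J θc - J θc) 0 = 0 ∧
          ∀ Mv : ℝ, ∃ R : ℝ, ∀ θ, R ≤ ‖θ - θc‖ →
            Mv ≤ max (-h θ) 0 + max (J θ - J θc) 0)) ∨
      (∀ ρ ∈ Set.range h, ρ ≤ 0 →
        IsCompact {θ : EuclideanSpace ℝ (Fin n) | ρ ≤ h θ})) :
    ∀ ρ ∈ Set.range h, ρ ≤ 0 → ∃ α > (0:ℝ),
      ∀ (t₀ : ℝ) (θ : ℝ → EuclideanSpace ℝ (Fin n)),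
        (∀ t ≥ t₀, HasDerivAt θ (Fvec J h c (θ t)) t) →
        (∀ t ≥ t₀, ρ ≤ h (θ t)) →
        AntitoneOn (fun t => max (-(α * h (θ t))) 0 + max (J (θ t) - J θc) 0)
          (Set.Ici t₀) ∧
        (∀ t₁ t₂, t₀ ≤ t₁ → t₁ < t₂ → (∀ t ∈ Set.Icc t₁ t₂, θ t ≠ θc) →
          max (-(α * h (θ t₂))) 0 + max (J (θ t₂) - J θc) 0 <
            max (-(α * h (θ t₁))) 0 + max (J (θ t₁) - J θc) 0) :=
  stmt11_general J h c hc θc hJ hJ' hh hA1 hA2 hA3 hA456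
end
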